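/- arXiv:1903.05992 — 6 statements merged into one kernel-verified Lean document; each statement's English description precedes it below -/
import Mathlib

section
/- Let k = 2^δ and suppose at most f faults occur, each fault removing one node from a single group during the recursive halving process n_p = (n_{p-1} - 1 - f_p)/2 where ∑ f_p ≤ f. Then every final group among the k groups has size at least n/k - f - 1. -/
open Finset

/-- The shifted size `a p + 1` obeys `a (p + 1) + 1 = (a p + 1 - fp p) / 2`, so halving loses
nothing beyond the faults, and each fault is itself halved by every later step. -/
lemma add_one_ge_of_faulty_halving {K : Type*} [Field K] [LinearOrder K] [IsStrictOrderedRing K]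
    (a fp : ℕ → K) (hfp : ∀ p, 0 ≤ fp p) (hrec : ∀ p, a (p + 1) = (a p - 1 - fp p) / 2)
    (δ : ℕ) : (a 0 + 1) / 2 ^ δ - ∑ p ∈ range δ, fp p ≤ a δ + 1 := by
  induction δ with
  | zero => simp
  | succ d ih =>
    have hsum : 0 ≤ ∑ p ∈ range d, fp p := sum_nonneg fun p _ => hfp p
    rw [hrec d, sum_range_succ, pow_succ, ← div_div]
    linarith [hfp d]

/-- Faulty recursive halving: `a 0 = n`, `a (p+1) = (a p - 1 - fp p)/2` over ℚ with
`fp p ≥ 0` and total faults `∑_{p<δ} fp p ≤ f`. Then each final group among the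
`k = 2^δ` groups has size at least `n/k - f - 1`. -/
theorem stmt_4 (n f : ℚ) (δ : ℕ) (a : ℕ → ℚ) (fp : ℕ → ℚ)
    (h0 : a 0 = n) (hfp : ∀ p, 0 ≤ fp p)
    (hrec : ∀ p, a (p + 1) = (a p - 1 - fp p) / 2)
    (hsum : ∑ p ∈ Finset.range δ, fp p ≤ f) :
    a δ ≥ n / 2 ^ δ - f - 1 := by
  have hbound := add_one_ge_of_faulty_halving a fp hfp hrec δ
  have hsplit : (n + 1) / 2 ^ δ = n / 2 ^ δ + 1 / 2 ^ δ := add_div n 1 _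
  have hpos : (0 : ℚ) < 1 / 2 ^ δ := by positivity
  subst h0
  linarith
end

section
/- Define a transition system on pairs (B, R) of disjoint finite sets of nodes (blue and red) with an edge set E ⊆ {unordered pairs of R} where transitions are: (i) two blue nodes interact, one becomes red; (ii) a blue and a red node interact, the blue becomes red; (iii) two red nodes with no edge between them become connected by an edge; (iv) an adversary removes any node and all its incident edges. Then from any reachable configuration with at least 2 nodes remaining, under any fair scheduling, the system stabilizes to a configuration where all remaining nodes are red and pairwise connected (a clique). -/
/-- Configurations of the Clique protocol: a set of alive nodes, the set of
nodes in state `r` (red; the others are blue `b`), and the active edges. -/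
structure CliqueConf (V : Type*) where
  alive : Finset V
  red : Finset V
  edges : Finset (Sym2 V)

/-- Pairwise-interaction transitions of the Clique protocol:
`(b,b,0)→(b,r,0)`, `(b,r,0)→(r,r,0)`, `(r,r,0)→(r,r,1)`. -/
inductive CliqueInteract {V : Type*} [DecidableEq V] : CliqueConf V → CliqueConf V → Prop
  | bb (C : CliqueConf V) (u v : V) (hu : u ∈ C.alive) (hv : v ∈ C.alive)
      (hne : u ≠ v) (hur : u ∉ C.red) (hvr : v ∉ C.red) :
      CliqueInteract C ⟨C.alive, insert v C.red, C.edges⟩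
  | br (C : CliqueConf V) (u v : V) (hu : u ∈ C.alive) (hv : v ∈ C.alive)
      (hne : u ≠ v) (hur : u ∉ C.red) (hvr : v ∈ C.red) :
      CliqueInteract C ⟨C.alive, insert u C.red, C.edges⟩
  | rr (C : CliqueConf V) (u v : V) (hu : u ∈ C.alive) (hv : v ∈ C.alive)
      (hne : u ≠ v) (hur : u ∈ C.red) (hvr : v ∈ C.red)
      (he : s(u, v) ∉ C.edges) :
      CliqueInteract C ⟨C.alive, C.red, insert s(u, v) C.edges⟩

/-- A crash fault: an adversary removes an alive node together with all its
incident active edges. -/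
def CliqueCrash {V : Type*} [DecidableEq V] (C C' : CliqueConf V) : Prop :=
  ∃ u ∈ C.alive, C' = ⟨C.alive.erase u, C.red.erase u,
    C.edges.filter (fun p => ¬ u ∈ p)⟩

/-- Fault tolerance of the Clique protocol: every fair execution starting from
(a configuration reachable from) the all-blue edgeless initial configuration,
with finitely many faults and at least 2 nodes always remaining, stabilizes to
a configuration in which all remaining nodes are red and pairwise connected. -/
theorem stmt_9 {V : Type*} [Fintype V] [DecidableEq V]
    (e : ℕ → CliqueConf V)
    (hreach : Relation.ReflTransGen
      (fun C C' => CliqueInteract C C' ∨ CliqueCrash C C')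
      ⟨Finset.univ, ∅, ∅⟩ (e 0))
    (hstep : ∀ t, CliqueInteract (e t) (e (t + 1)) ∨ CliqueCrash (e t) (e (t + 1))
      ∨ e (t + 1) = e t)
    (hfin : ∃ T, ∀ t ≥ T, ¬ CliqueCrash (e t) (e (t + 1)))
    (hsize : ∀ t, 2 ≤ (e t).alive.card)
    (hfair : ∀ C : CliqueConf V, (∀ t, ∃ t' ≥ t, e t' = C) →
      ∀ C', CliqueInteract C C' → ∀ t, ∃ t' ≥ t, e t' = C') :
    ∃ t, ∀ i ≥ t, e i = e t ∧
      (∀ v ∈ (e t).alive, v ∈ (e t).red) ∧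
      (∀ u ∈ (e t).alive, ∀ v ∈ (e t).alive, u ≠ v → s(u, v) ∈ (e t).edges) := by
  classical
  obtain ⟨T, hT⟩ := hfin
  set μ : CliqueConf V → ℕ := fun C => C.red.card + C.edges.card with hμ
  -- each interaction increases μ by exactly 1
  have hint : ∀ {C C' : CliqueConf V}, CliqueInteract C C' → μ C' = μ C + 1 := by
    intro C C' h
    cases h with
    | bb u v hu hv hne hur hvr =>
        simp only [hμ, Finset.card_insert_of_notMem hvr]; omega
    | br u v hu hv hne hur hvr =>
        simp only [hμ, Finset.card_insert_of_notMem hur]; omega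
    | rr u v hu hv hne hur hvr he =>
        simp only [hμ, Finset.card_insert_of_notMem he]; omega
  -- after T, every step either keeps the configuration or increments μ
  have hstep' : ∀ t, T ≤ t → e (t + 1) = e t ∨ μ (e (t + 1)) = μ (e t) + 1 := by
    intro t ht
    rcases hstep t with h | h | h
    · exact Or.inr (hint h)
    · exact absurd h (hT t ht)
    · exact Or.inl h
  -- μ ∘ e is monotone on [T, ∞)
  have hmono : ∀ a, T ≤ a → ∀ b, a ≤ b → μ (e a) ≤ μ (e b) := by
    intro a ha b hb
    induction b, hb using Nat.le_induction with
    | base => exact le_refl _ --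
    | succ n hn ih =>
        rcases hstep' n (ha.trans hn) with h | h
        · rw [h]; exact ih
        · omega
  -- μ is bounded
  have hbd : ∀ t, μ (e t) ≤ Fintype.card V + Fintype.card (Sym2 V) := by
    intro t
    have h1 := Finset.card_le_univ (e t).red
    have h2 := Finset.card_le_univ (e t).edges
    simp only [hμ, Finset.card_univ] at *
    omega
  -- hence μ ∘ e is eventually constant
  have hconst : ∃ t0, T ≤ t0 ∧ ∀ t, t0 ≤ t → μ (e t) = μ (e t0) := by
    by_contra hcon
    push_neg at hcon
    have hgrow : ∀ n, ∃ t, T ≤ t ∧ n ≤ μ (e t) := by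
      intro n
      induction n with
      | zero => exact ⟨T, le_refl _, Nat.zero_le _⟩
      | succ n ih =>
          obtain ⟨t, ht, hn⟩ := ih
          obtain ⟨t', ht', hne⟩ := hcon t ht
          have := hmono t ht t' ht'
          exact ⟨t', ht.trans ht', by omega⟩
    obtain ⟨t, _, ht⟩ := hgrow (Fintype.card V + Fintype.card (Sym2 V) + 1)
    have := hbd t
    omega
  obtain ⟨t0, ht0T, ht0⟩ := hconst
  -- from t0 on, the execution is constant
  have hfix : ∀ i, t0 ≤ i → e i = e t0 := by
    intro i hi
    induction i, hi using Nat.le_induction with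
    | base => rfl
    | succ n hn ih =>
        rcases hstep' n (ht0T.trans hn) with h | h
        · rw [h, ih]
        · have h1 := ht0 n hn
          have h2 := ht0 (n + 1) (hn.trans (Nat.le_succ n))
          omega
  set C := e t0 with hC
  -- no interaction is enabled at C
  have hno : ∀ C', ¬ CliqueInteract C C' := by
    intro C' hint'
    have hocc : ∀ t, ∃ t' ≥ t, e t' = C :=
      fun t => ⟨max t t0, le_max_left _ _, hfix _ (le_max_right _ _)⟩
    obtain ⟨t', ht', he'⟩ := hfair C hocc C' hint' t0
    have : e t' = C := hfix t' ht'
    have hCC' : C' = C := by rw [← he', this]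
    have := hint hint'
    rw [hCC'] at this
    omega
  -- all alive nodes are red
  have hred : ∀ v ∈ C.alive, v ∈ C.red := by
    intro v hv
    by_contra hvr
    have hcard : 1 < C.alive.card := by
      have := hsize t0
      simp only [hC]
      omega
    obtain ⟨u, hu, hne⟩ := Finset.exists_mem_ne hcard v
    by_cases hur : u ∈ C.red
    · exact hno _ (CliqueInteract.br C v u hv hu (Ne.symm hne) hvr hur)
    · exact hno _ (CliqueInteract.bb C u v hu hv hne hur hvr)
  -- all pairs of alive nodes are connected
  have hclique : ∀ u ∈ C.alive, ∀ v ∈ C.alive, u ≠ v → s(u, v) ∈ C.edges := by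
    intro u hu v hv hne
    by_contra he
    exact hno _ (CliqueInteract.rr C u v hu hv hne (hred u hu) (hred v hv) he)
  exact ⟨t0, fun i hi => ⟨hfix i hi, hred, hclique⟩⟩
end

section
/- In the FT Spanning Star protocol without faults, the following invariant holds in every reachable configuration: every connected component of the active-edge graph with at least one edge contains at least one node in state b, and every isolated node (degree 0) is in state b. -/
/-- Configurations of the FT Spanning Star protocol (fault-free setting): the
set of nodes in state `r` (the others are in state `b`) and the active edges. -/
structure StarConf (V : Type*) where
  red : Finset V
  edges : Finset (Sym2 V)

/-- The transitions of FT Spanning Star: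
`(b,b,0)→(b,r,1)`, `(b,b,1)→(b,r,1)`, `(r,r,1)→(b,b,0)`, `(b,r,0)→(b,r,1)`. -/
inductive StarStep {V : Type*} [DecidableEq V] : StarConf V → StarConf V → Prop
  | bb0 (C : StarConf V) (u v : V) (hne : u ≠ v) (hu : u ∉ C.red) (hv : v ∉ C.red)
      (he : s(u, v) ∉ C.edges) :
      StarStep C ⟨insert v C.red, insert s(u, v) C.edges⟩
  | bb1 (C : StarConf V) (u v : V) (hne : u ≠ v) (hu : u ∉ C.red) (hv : v ∉ C.red)
      (he : s(u, v) ∈ C.edges) :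
      StarStep C ⟨insert v C.red, C.edges⟩
  | rr1 (C : StarConf V) (u v : V) (hne : u ≠ v) (hu : u ∈ C.red) (hv : v ∈ C.red)
      (he : s(u, v) ∈ C.edges) :
      StarStep C ⟨(C.red.erase u).erase v, C.edges.erase s(u, v)⟩
  | br0 (C : StarConf V) (u v : V) (hne : u ≠ v) (hu : u ∉ C.red) (hv : v ∈ C.red)
      (he : s(u, v) ∉ C.edges) :
      StarStep C ⟨C.red, insert s(u, v) C.edges⟩

/-- Adjacency in the active-edge graph of a configuration. -/
def StarAdj {V : Type*} (C : StarConf V) (u v : V) : Prop :=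
  u ≠ v ∧ s(u, v) ∈ C.edges

/-!
Call nodes in state `r` red and nodes in state `b` blue. The invariant is strengthened to: every
red node is joined by an active path to a blue node. A red node is then never isolated, and a
component with an edge contains a blue node. The three rules that make a node `v` red or add an
edge leave an active edge from `v` to a blue node, so old paths ending at `v` extend by one step.
The rule `(r,r,1)→(b,b,0)` deletes the edge `uv`, but both `u` and `v` turn blue, so a path cut
at that edge still ends at a blue node.
-/

theorem Relation.ReflTransGen.exists_lift_until {α : Type*} {r r' : α → α → Prop} {s : Set α}
    (hr : ∀ a b, r a b → a ∉ s → r' a b) {x w : α} (h : Relation.ReflTransGen r x w) :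
    ∃ z, Relation.ReflTransGen r' x z ∧ (z ∈ s ∨ z = w) := by
  induction h with
  | refl => exact ⟨x, .refl, .inr rfl⟩
  | @tail b c _ hbc ih =>
    obtain ⟨z, hxz, hz | rfl⟩ := ih
    · exact ⟨z, hxz, .inl hz⟩
    · by_cases hzs : z ∈ s
      · exact ⟨z, hxz, .inl hzs⟩
      · exact ⟨c, hxz.tail (hr z c hbc hzs), .inr rfl⟩

namespace StarConf

variable {V : Type*}

theorem starAdj_mono {C C' : StarConf V} (hE : C.edges ⊆ C'.edges) {x y : V}
    (h : StarAdj C x y) : StarAdj C' x y :=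
  ⟨h.1, hE h.2⟩

theorem reflTransGen_starAdj_mono {C C' : StarConf V} (hE : C.edges ⊆ C'.edges) {x y : V}
    (h : Relation.ReflTransGen (StarAdj C) x y) : Relation.ReflTransGen (StarAdj C') x y :=
  Relation.ReflTransGen.mono (fun _ _ => starAdj_mono hE) _ _ h

def RedReachesBlue (C : StarConf V) : Prop :=
  ∀ u ∈ C.red, ∃ w, Relation.ReflTransGen (StarAdj C) u w ∧ w ∉ C.red

theorem RedReachesBlue.exists_starAdj {C : StarConf V} (hC : C.RedReachesBlue) {u : V}
    (hu : u ∈ C.red) : ∃ v, StarAdj C u v := by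
  obtain ⟨w, huw, hw⟩ := hC u hu
  rcases huw.cases_head with rfl | ⟨v, huv, _⟩
  · exact absurd hu hw
  · exact ⟨v, huv⟩

variable [DecidableEq V]

theorem RedReachesBlue.of_red_subset_insert {C C' : StarConf V} {u v : V}
    (hC : C.RedReachesBlue) (hR : C'.red ⊆ insert v C.red) (hE : C.edges ⊆ C'.edges)
    (hvu : StarAdj C' v u) (hu : u ∉ C'.red) : C'.RedReachesBlue := by
  have blue_or_eq : ∀ w ∉ C.red, w ∉ C'.red ∨ w = v := fun w hw => by
    by_cases hwv : w = v
    · exact .inr hwv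
    · exact .inl fun hw' => hw ((Finset.mem_insert.mp (hR hw')).resolve_left hwv)
  intro x hx
  rcases Finset.mem_insert.mp (hR hx) with rfl | hx
  · exact ⟨u, .single hvu, hu⟩
  obtain ⟨w, hxw, hw⟩ := hC x hx
  have hxw' := reflTransGen_starAdj_mono hE hxw
  rcases blue_or_eq w hw with hw' | rfl
  · exact ⟨w, hxw', hw'⟩
  · exact ⟨u, hxw'.tail hvu, hu⟩

theorem RedReachesBlue.erase_edge {C : StarConf V} (hC : C.RedReachesBlue) (u v : V) :
    RedReachesBlue ⟨(C.red.erase u).erase v, C.edges.erase s(u, v)⟩ := by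
  intro x hx
  obtain ⟨w, hxw, hw⟩ := hC x (Finset.mem_of_mem_erase (Finset.mem_of_mem_erase hx))
  have survives : ∀ a b, StarAdj C a b → a ∉ ({u, v} : Set V) →
      StarAdj ⟨(C.red.erase u).erase v, C.edges.erase s(u, v)⟩ a b := by
    intro a b hab ha
    refine ⟨hab.1, Finset.mem_erase.mpr ⟨fun he => ha ?_, hab.2⟩⟩
    rcases Sym2.eq_iff.mp he with ⟨rfl, _⟩ | ⟨rfl, _⟩ <;> simp
  obtain ⟨z, hxz, hz⟩ := hxw.exists_lift_until survives
  refine ⟨z, hxz, fun hz' => ?_⟩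
  rcases hz with (rfl | rfl) | rfl
  · simp at hz'
  · simp at hz'
  · exact hw (Finset.mem_of_mem_erase (Finset.mem_of_mem_erase hz'))

theorem RedReachesBlue.of_starStep {C C' : StarConf V} (hC : C.RedReachesBlue)
    (h : StarStep C C') : C'.RedReachesBlue := by
  cases h with
  | bb0 u v hne hu _ _ =>
    exact hC.of_red_subset_insert (u := u) subset_rfl (Finset.subset_insert _ _)
      ⟨hne.symm, by simp [Sym2.eq_swap]⟩ (by simp [hne, hu])
  | bb1 u v hne hu _ he =>
    exact hC.of_red_subset_insert (u := u) subset_rfl subset_rfl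
      ⟨hne.symm, by rwa [Sym2.eq_swap]⟩ (by simp [hne, hu])
  | rr1 u v _ _ _ _ => exact hC.erase_edge u v
  | br0 u v hne hu _ _ =>
    exact hC.of_red_subset_insert (v := v) (Finset.subset_insert _ _)
      (Finset.subset_insert _ _) ⟨hne.symm, by simp [Sym2.eq_swap]⟩ hu

theorem RedReachesBlue.of_reachable {C : StarConf V}
    (h : Relation.ReflTransGen StarStep ⟨∅, ∅⟩ C) : C.RedReachesBlue := by
  induction h with
  | refl => intro u hu; simp at hu
  | tail _ hstep ih => exact ih.of_starStep hstep

end StarConf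

/-- Invariant of FT Spanning Star without faults: in every reachable
configuration, every isolated node is in state `b`, and every connected
component containing an edge contains at least one node in state `b`. -/
theorem stmt_11 {V : Type*} [DecidableEq V] (C : StarConf V)
    (hreach : Relation.ReflTransGen StarStep ⟨∅, ∅⟩ C) :
    (∀ u : V, (¬ ∃ v, StarAdj C u v) → u ∉ C.red) ∧
    (∀ u : V, (∃ v, StarAdj C u v) →
      ∃ w, Relation.ReflTransGen (StarAdj C) u w ∧ w ∉ C.red) := by
  have hC := StarConf.RedReachesBlue.of_reachable hreach
  refine ⟨fun u hiso hu => hiso (hC.exists_starAdj hu), fun u _ => ?_⟩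
  by_cases hu : u ∈ C.red
  · exact hC u hu
  · exact ⟨u, .refl, hu⟩
end

section
/- In the FT Cycle-Cover protocol without faults, the following invariant holds in all reachable configurations: a node in state q₀ has degree 0, a node in state q₁ has degree exactly 1, and a node in state q₂ has degree exactly 2; consequently the active-edge graph is always a disjoint union of paths and cycles (maximum degree 2). -/
/-- Configurations of the FT Cycle-Cover protocol (fault-free setting): the
state of every node is a natural number (`0`, `1` or `2` encoding `q₀, q₁, q₂`)
together with the set of active edges. -/
structure CycleConf (V : Type*) where
  state : V → ℕ
  edges : Finset (Sym2 V)

/-- The degree of a node: the number of active incident edges. -/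
def cycleDeg {V : Type*} [DecidableEq V] (C : CycleConf V) (u : V) : ℕ :=
  (C.edges.filter (fun p => u ∈ p)).card

/-- The transitions of FT Cycle-Cover:
`(q₀,q₀,0)→(q₁,q₁,1)`, `(q₁,q₀,0)→(q₂,q₁,1)`, `(q₁,q₁,0)→(q₂,q₂,1)`. -/
inductive CycleStep {V : Type*} [DecidableEq V] : CycleConf V → CycleConf V → Prop
  | q00 (C : CycleConf V) (u v : V) (hne : u ≠ v)
      (hu : C.state u = 0) (hv : C.state v = 0) (he : s(u, v) ∉ C.edges) :
      CycleStep C ⟨Function.update (Function.update C.state u 1) v 1,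
        insert s(u, v) C.edges⟩
  | q10 (C : CycleConf V) (u v : V) (hne : u ≠ v)
      (hu : C.state u = 1) (hv : C.state v = 0) (he : s(u, v) ∉ C.edges) :
      CycleStep C ⟨Function.update (Function.update C.state u 2) v 1,
        insert s(u, v) C.edges⟩
  | q11 (C : CycleConf V) (u v : V) (hne : u ≠ v)
      (hu : C.state u = 1) (hv : C.state v = 1) (he : s(u, v) ∉ C.edges) :
      CycleStep C ⟨Function.update (Function.update C.state u 2) v 2,
        insert s(u, v) C.edges⟩

lemma deg_insert {V : Type*} [DecidableEq V] (E : Finset (Sym2 V)) (u v w : V)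
    (he : s(u,v) ∉ E) :
    ((insert s(u,v) E).filter (fun p => w ∈ p)).card
      = (E.filter (fun p => w ∈ p)).card + (if w ∈ s(u,v) then 1 else 0) := by
  by_cases hw : w ∈ s(u,v)
  · rw [Finset.filter_insert, if_pos hw, Finset.card_insert_of_notMem (by
      simp only [Finset.mem_filter]; tauto), if_pos hw]
  · simp [Finset.filter_insert, hw]

/-- Invariant of FT Cycle-Cover without faults: in every reachable
configuration the degree of each node equals its state (so `q₀` nodes have
degree 0, `q₁` degree 1, `q₂` degree 2) and states stay at most 2; hence the
active-edge graph has maximum degree 2 and is a disjoint union of paths and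
cycles. -/
theorem stmt_13 {V : Type*} [DecidableEq V] (C : CycleConf V)
    (hreach : Relation.ReflTransGen CycleStep ⟨fun _ => 0, ∅⟩ C) :
    ∀ u : V, cycleDeg C u = C.state u ∧ C.state u ≤ 2 := by
  induction hreach with
  | refl => intro u; simp [cycleDeg]
  | tail hab hbc ih =>
    intro w
    cases hbc with
    | q00 u v hne hu hv he | q10 u v hne hu hv he | q11 u v hne hu hv he =>
      have du := ih u
      have dv := ih v
      have dw := ih w
      unfold cycleDeg at *
      simp only [deg_insert _ u v w he, Sym2.mem_iff]
      by_cases hwv : w = v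
      · subst hwv
        simp_all [Function.update_self]
      · by_cases hwu : w = u
        · subst hwu
          simp_all [Function.update_of_ne hwv, Function.update_self]
        · simp_all [Function.update_of_ne hwv, Function.update_of_ne hwu]
end

section
/- Consider a system in which initially all n nodes are leaders, pairwise interactions between two leaders turn exactly one of them into a follower, a crash fault may remove any node, and a crash-fault notification turns at least one surviving node (a notified one) into a leader. Then after the last fault, in every fair execution the number of leaders is eventually exactly 1 and remains 1 forever. -/
/-- Configurations for leader election under crash faults: the set of alive
nodes and the set of alive leaders. -/
structure LeConf (V : Type*) where
  alive : Finset V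
  leaders : Finset V

/-- A leader-elimination interaction: two distinct alive leaders meet and
exactly one of them becomes a follower. -/
def LeElim {V : Type*} [DecidableEq V] (C C' : LeConf V) : Prop :=
  ∃ u v, u ∈ C.alive ∧ v ∈ C.alive ∧ u ∈ C.leaders ∧ v ∈ C.leaders ∧ u ≠ v ∧
    C' = ⟨C.alive, C.leaders.erase v⟩

/-- A crash fault with notification: an alive node `u` is removed, and at
least one surviving (notified) node becomes a leader. -/
def LeCrash {V : Type*} [DecidableEq V] (C C' : LeConf V) : Prop :=
  ∃ u ∈ C.alive, ∃ w ∈ C.alive.erase u,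
    C' = ⟨C.alive.erase u, insert w (C.leaders.erase u)⟩

/-- Leader election under crash faults: starting from the configuration where
all `n` nodes are leaders, in every fair execution with finitely many faults
the number of leaders is eventually exactly 1 and remains 1 forever. -/
theorem stmt_15 {V : Type*} [Fintype V] [DecidableEq V] [Nonempty V]
    (e : ℕ → LeConf V)
    (hinit : e 0 = ⟨Finset.univ, Finset.univ⟩)
    (hstep : ∀ t, LeElim (e t) (e (t + 1)) ∨ LeCrash (e t) (e (t + 1))
      ∨ e (t + 1) = e t)
    (hfin : ∃ T, ∀ t ≥ T, ¬ LeCrash (e t) (e (t + 1)))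
    (hfair : ∀ C : LeConf V, (∀ t, ∃ t' ≥ t, e t' = C) →
      ∀ C', LeElim C C' → ∀ t, ∃ t' ≥ t, e t' = C') :
    ∃ t, ∀ i ≥ t, (e i).leaders.card = 1 := by
  obtain ⟨T, hT⟩ := hfin
  -- Invariant: leaders nonempty and leaders ⊆ alive
  have hinv : ∀ t, (e t).leaders.Nonempty ∧ (e t).leaders ⊆ (e t).alive := by
    intro t
    induction t with
    | zero => rw [hinit]; exact ⟨Finset.univ_nonempty, le_refl _⟩
    | succ t ih =>
      rcases hstep t with h | h | h
      · obtain ⟨u, v, hu, hv, hul, hvl, huv, hC⟩ := h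
        rw [hC]
        exact ⟨⟨u, Finset.mem_erase.mpr ⟨huv, hul⟩⟩,
          fun x hx => ih.2 (Finset.mem_of_mem_erase hx)⟩
      · obtain ⟨u, hu, w, hw, hC⟩ := h
        rw [hC]
        refine ⟨⟨w, Finset.mem_insert_self _ _⟩, fun x hx => ?_⟩
        rcases Finset.mem_insert.mp hx with rfl | hx
        · exact hw
        · exact Finset.mem_erase.mpr ⟨(Finset.mem_erase.mp hx).1,
            ih.2 (Finset.mem_erase.mp hx).2⟩
      · rw [h]; exact ih
  -- After T, leader count is nonincreasing
  have hmono1 : ∀ t ≥ T, (e (t + 1)).leaders.card ≤ (e t).leaders.card := by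
    intro t ht
    rcases hstep t with h | h | h
    · obtain ⟨u, v, _, _, _, hvl, _, hC⟩ := h
      rw [hC]
      exact le_trans (Finset.card_erase_le) (le_refl _)
    · exact absurd h (hT t ht)
    · rw [h]
  have hmono : ∀ s t, T ≤ s → s ≤ t →
      (e t).leaders.card ≤ (e s).leaders.card := by
    intro s t hs hst
    induction t with
    | zero => rw [Nat.le_zero.mp hst]
    | succ t ih =>
      rcases Nat.lt_or_ge s (t + 1) with h | h
      · exact le_trans (hmono1 t (le_trans hs (Nat.lt_succ_iff.mp h)))
          (ih (Nat.lt_succ_iff.mp h))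
      · have : s = t + 1 := le_antisymm hst h
        rw [this]
    -- handle zero case properly below
  -- take the minimal leader count achieved after T
  obtain ⟨k, hk, hkmin⟩ := Nat.lt_wfRel.wf.has_min
    {k | ∃ t ≥ T, (e t).leaders.card = k} ⟨(e T).leaders.card, T, le_refl T, rfl⟩
  obtain ⟨t₀, ht₀T, ht₀k⟩ := hk
  have hconst : ∀ t ≥ t₀, (e t).leaders.card = k := by
    intro t ht
    have h1 : (e t).leaders.card ≤ k := ht₀k ▸ hmono t₀ t ht₀T ht
    have h2 : ¬ (e t).leaders.card < k :=
      hkmin _ ⟨t, le_trans ht₀T ht, rfl⟩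
    omega
  have hk1 : 1 ≤ k := by
    have := (hinv t₀).1
    rw [← ht₀k]
    exact Finset.card_pos.mpr this
  rcases eq_or_lt_of_le hk1 with hk1 | hk2
  · exact ⟨t₀, fun i hi => (hconst i hi).trans hk1.symm⟩
  -- k ≥ 2: the execution is eventually constant, contradict fairness
  exfalso
  have hstab : ∀ t ≥ t₀, e t = e t₀ := by
    intro t ht
    induction t with
    | zero => rw [Nat.le_zero.mp ht]
    | succ t ih =>
      rcases Nat.lt_or_ge t₀ (t + 1) with h | h
      · have ht' : t₀ ≤ t := Nat.lt_succ_iff.mp h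
        rcases hstep t with hst | hst | hst
        · obtain ⟨u, v, _, _, _, hvl, _, hC⟩ := hst
          have : (e (t + 1)).leaders.card < (e t).leaders.card := by
            rw [hC]
            exact Finset.card_erase_lt_of_mem hvl
          rw [hconst t ht', hconst (t + 1) (le_trans ht' (Nat.le_succ t))] at this
          omega
        · exact absurd hst (hT t (le_trans ht₀T ht'))
        · rw [hst]; exact ih ht'
      · have : t₀ = t + 1 := le_antisymm ht h
        rw [this]
  set C := e t₀ with hC
  obtain ⟨u, hul, v, hvl, huv⟩ : ∃ u ∈ C.leaders, ∃ v ∈ C.leaders, u ≠ v := by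
    apply Finset.one_lt_card.mp
    rw [show C.leaders.card = k from hconst t₀ (le_refl t₀)]
    exact hk2
  have helim : LeElim C ⟨C.alive, C.leaders.erase v⟩ :=
    ⟨u, v, (hinv t₀).2 hul, (hinv t₀).2 hvl, hul, hvl, huv, rfl⟩
  have hreach : ∀ t, ∃ t' ≥ t, e t' = C := fun t =>
    ⟨max t t₀, le_max_left _ _, hstab _ (le_max_right _ _)⟩
  obtain ⟨t', ht', het'⟩ := hfair C hreach _ helim t₀
  have h1 : e t' = C := hstab t' ht'
  rw [h1] at het'
  have : C.leaders.card = (C.leaders.erase v).card := by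
    conv_lhs => rw [het']
  rw [Finset.card_erase_of_mem hvl] at this
  have hcard : C.leaders.card = k := hconst t₀ (le_refl t₀)
  omega
end

section
/- Let S be a finite set of 'phased' agents partitioned into those in set S_max (who have restarted, all sharing the common maximum phase value p) and those outside with phase < p, where any interaction between an agent outside S_max and an agent in S_max moves the outside agent into S_max (setting its phase to p), interactions within S_max do not change phases, and interactions outside S_max never raise any phase to ≥ p. Then under fair scheduling S_max is nondecreasing and eventually equals the whole population. -/
/-- Absorption into the maximum-phase set: if an interaction between a node
outside `e t` and a node inside moves the outside node in, and every pair is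
scheduled infinitely often, then `e` is nondecreasing and eventually equals the
whole population. -/
theorem stmt_18 {V : Type*} [Fintype V] [DecidableEq V]
    (e : ℕ → Finset V) (σ : ℕ → V × V)
    (h0 : (e 0).Nonempty)
    (hstep : ∀ t, e (t + 1) =
      if (σ t).1 ∈ e t ∨ (σ t).2 ∈ e t
      then insert (σ t).1 (insert (σ t).2 (e t)) else e t)
    (hfair : ∀ u v : V, ∀ t, ∃ t' ≥ t, σ t' = (u, v)) :
    (∀ t, e t ⊆ e (t + 1)) ∧ ∃ t, ∀ i ≥ t, e i = Finset.univ := by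
  have hmono1 : ∀ t, e t ⊆ e (t + 1) := by
    intro t
    rw [hstep t]
    split
    · exact fun x hx => Finset.mem_insert_of_mem (Finset.mem_insert_of_mem hx)
    · exact subset_rfl
  have hmono : ∀ s t, s ≤ t → e s ⊆ e t := by
    intro s t h
    induction t with
    | zero => simp [Nat.le_zero.mp h]
    | succ n ih =>
      rcases Nat.lt_or_ge s (n+1) with h' | h'
      · exact (ih (Nat.lt_succ_iff.mp h')).trans (hmono1 n)
      · have : s = n + 1 := le_antisymm h h'
        simp [this]
  refine ⟨hmono1, ?_⟩
  obtain ⟨v0, hv0⟩ := h0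
  have key : ∀ u : V, ∃ t, u ∈ e t := by
    intro u
    obtain ⟨t', _, ht'⟩ := hfair u v0 0
    refine ⟨t' + 1, ?_⟩
    rw [hstep t', ht']
    have : v0 ∈ e t' := hmono 0 t' (Nat.zero_le _) hv0
    simp [this]
  choose T hT using key
  refine ⟨Finset.univ.sup T, fun i hi => ?_⟩
  apply Finset.eq_univ_iff_forall.mpr
  intro u
  exact hmono (T u) i ((Finset.le_sup (Finset.mem_univ u)).trans hi) (hT u)
end
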